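/- arXiv:2405.07110 — 2 statements merged into one kernel-verified Lean document; each statement's English description precedes it below -/
import Mathlib

section
/- Let v be a tree representation on {1,…,n} and let v′ be obtained from v by a single HOP. Then v′ is again a tree representation on {1,…,n}. -/
/-- 0-indexed position of the first occurrence of `x` in `v`. -/
def firstOcc (v : List ℕ) (x : ℕ) : ℕ := v.idxOf x

/-- 0-indexed position of the second (= last, when `x` occurs exactly twice)
occurrence of `x` in `v`. -/
def secondOcc (v : List ℕ) (x : ℕ) : ℕ := v.length - 1 - v.reverse.idxOf x

/-- `v` is a tree representation on `{1,…,n}`: it has length `2n`, entries in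
`{1,…,n}`, every `i ∈ {1,…,n}` occurs exactly twice, the first entry is `1`,
for every `i ∈ {2,…,n}` the first occurrence of `i` appears strictly before the
second occurrence of `i-1`, and the second occurrence of `i` appears strictly
after the second occurrence of `i-1`. -/
def IsTreeRep (n : ℕ) (v : List ℕ) : Prop :=
  v.length = 2 * n ∧
  (∀ x ∈ v, 1 ≤ x ∧ x ≤ n) ∧
  (∀ i, 1 ≤ i → i ≤ n → v.count i = 2) ∧
  v.getD 0 0 = 1 ∧
  (∀ i, 2 ≤ i → i ≤ n → firstOcc v i < secondOcc v (i - 1)) ∧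
  (∀ i, 2 ≤ i → i ≤ n → secondOcc v (i - 1) < secondOcc v i)

/-- A single HOP: for some `i ∈ {2,…,n}`, remove the first occurrence of `i`
from `v` and reinsert it at a (0-indexed) position `k` strictly after the first
entry (`1 ≤ k`) and weakly before the (resulting position of the) second
occurrence of `i-1`. -/
def IsHop (n : ℕ) (v v' : List ℕ) : Prop :=
  ∃ i k, 2 ≤ i ∧ i ≤ n ∧ 1 ≤ k ∧ k ≤ secondOcc (v.erase i) (i - 1) ∧
    v' = (v.erase i).insertIdx k i

/-!
Let `w` be `v` with the first occurrence of `i` erased. Then `v` and the hopped list `v'` both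
arise from `w` by inserting `i`, at the old position `p` and at the new position `k` respectively.
Inserting an entry at position `q` moves every other position `r` to `insertPos q r`, which is
strictly monotone. Hence the ordering conditions of a tree representation hold for `w` with `i`
inserted at `q` if and only if they hold for `w` itself, with the condition on the first
occurrence of `i` replaced by `q ≤ secondOcc w (i - 1)`. That is exactly the range a HOP allows.
-/

open List

def insertPos (k q : ℕ) : ℕ := if q < k then q else q + 1

theorem insertPos_lt_insertPos_iff {k a b : ℕ} : insertPos k a < insertPos k b ↔ a < b := by
  unfold insertPos; split_ifs <;> omega

theorem lt_insertPos_iff {k q : ℕ} : k < insertPos k q ↔ k ≤ q := by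
  unfold insertPos; split_ifs <;> omega

theorem List.insertIdx_eq_take_append_cons_drop {α : Type*} {a : α} :
    ∀ {l : List α} {k : ℕ}, k ≤ l.length → l.insertIdx k a = l.take k ++ a :: l.drop k
  | _, 0, _ => rfl
  | b :: l, k + 1, h => by
    rw [insertIdx_succ_cons, insertIdx_eq_take_append_cons_drop (by simpa using h)]
    rfl

theorem List.getD_zero_append_cons {α : Type*} {s t : List α} {a d : α} (hs : 0 < s.length) :
    (s ++ a :: t).getD 0 d = (s ++ t).getD 0 d := by
  rw [getD_append _ _ _ _ hs, getD_append _ _ _ _ hs]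

theorem List.idxOf_append_cons_of_ne {α : Type*} [BEq α] [LawfulBEq α] {s t : List α} {a x : α}
    (h : x ≠ a) : (s ++ a :: t).idxOf x = insertPos s.length ((s ++ t).idxOf x) := by
  rw [idxOf_append, idxOf_append, insertPos]
  by_cases hx : x ∈ s
  · rw [if_pos hx, if_pos hx, if_pos (idxOf_lt_length_of_mem hx)]
  · rw [if_neg hx, if_neg hx, if_neg (by omega), idxOf_cons_ne _ (Ne.symm h)]
    omega

theorem firstOcc_append_cons_self {s t : List ℕ} {a : ℕ} (h : a ∉ s) :
    firstOcc (s ++ a :: t) a = s.length := by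
  simp [firstOcc, idxOf_append, h]

theorem secondOcc_lt_length {l : List ℕ} {x : ℕ} (h : x ∈ l) : secondOcc l x < l.length := by
  have := length_pos_of_mem h
  unfold secondOcc
  omega

theorem secondOcc_append (s t : List ℕ) (x : ℕ) :
    secondOcc (s ++ t) x = if x ∈ t then s.length + secondOcc t x else secondOcc s x := by
  unfold secondOcc
  simp only [reverse_append, idxOf_append, mem_reverse, length_append, length_reverse]
  split_ifs with ht
  · have := idxOf_lt_length_of_mem (mem_reverse.2 ht)
    rw [length_reverse] at this
    omega
  · omega

theorem length_le_secondOcc_append_iff {s t : List ℕ} {x : ℕ} (hx : x ∈ s ++ t) :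
    s.length ≤ secondOcc (s ++ t) x ↔ x ∈ t := by
  rw [secondOcc_append]
  split_ifs with ht
  · simp [ht]
  · have := secondOcc_lt_length (by simpa [ht] using hx)
    simp only [ht, iff_false]
    omega

theorem secondOcc_append_cons {s t : List ℕ} {a x : ℕ} (hx : x ∈ s ++ t) (h : x = a → x ∈ t) :
    secondOcc (s ++ a :: t) x = insertPos s.length (secondOcc (s ++ t) x) := by
  rw [← singleton_append, ← append_assoc, secondOcc_append, secondOcc_append s t]
  split_ifs with ht
  · simp only [insertPos, length_append, length_singleton]
    split_ifs <;> omega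
  · have hs : x ∈ s := by simpa [ht] using hx
    have hxa : x ∉ [a] := by simpa using mt h ht
    rw [secondOcc_append, if_neg hxa, insertPos, if_pos (secondOcc_lt_length hs)]

section InsertOccurrence

variable {n a : ℕ} {s t : List ℕ}

theorem secondOcc_chain_append_cons_iff (hw : ∀ x, 1 ≤ x → x ≤ n → x ∈ s ++ t) (hat : a ∈ t) :
    (∀ m, 2 ≤ m → m ≤ n → secondOcc (s ++ a :: t) (m - 1) < secondOcc (s ++ a :: t) m) ↔
      ∀ m, 2 ≤ m → m ≤ n → secondOcc (s ++ t) (m - 1) < secondOcc (s ++ t) m := by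
  refine forall₃_congr fun m h2 hn => ?_
  rw [secondOcc_append_cons (hw m (by omega) hn) fun hma => hma ▸ hat,
    secondOcc_append_cons (hw (m - 1) (by omega) (by omega)) fun hma => hma ▸ hat,
    insertPos_lt_insertPos_iff]

theorem firstOcc_lt_secondOcc_append_cons_iff (hw : ∀ x, 1 ≤ x → x ≤ n → x ∈ s ++ t)
    (has : a ∉ s) (hat : a ∈ t) (ha : 2 ≤ a) (han : a ≤ n) :
    (∀ m, 2 ≤ m → m ≤ n → firstOcc (s ++ a :: t) m < secondOcc (s ++ a :: t) (m - 1)) ↔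
      (∀ m, 2 ≤ m → m ≤ n → m ≠ a → firstOcc (s ++ t) m < secondOcc (s ++ t) (m - 1)) ∧
        s.length ≤ secondOcc (s ++ t) (a - 1) := by
  have hpred : ∀ m, 2 ≤ m → m ≤ n →
      secondOcc (s ++ a :: t) (m - 1) = insertPos s.length (secondOcc (s ++ t) (m - 1)) :=
    fun m h2 hn => secondOcc_append_cons (hw (m - 1) (by omega) (by omega)) fun hma => hma ▸ hat
  have hne : ∀ m, 2 ≤ m → m ≤ n → m ≠ a →
      (firstOcc (s ++ a :: t) m < secondOcc (s ++ a :: t) (m - 1) ↔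
        firstOcc (s ++ t) m < secondOcc (s ++ t) (m - 1)) := fun m h2 hn hma => by
    rw [firstOcc, idxOf_append_cons_of_ne hma, hpred m h2 hn, insertPos_lt_insertPos_iff, firstOcc]
  have hself : firstOcc (s ++ a :: t) a < secondOcc (s ++ a :: t) (a - 1) ↔
      s.length ≤ secondOcc (s ++ t) (a - 1) := by
    rw [firstOcc_append_cons_self has, hpred a ha han, lt_insertPos_iff]
  constructor
  · exact fun h => ⟨fun m h2 hn hma => (hne m h2 hn hma).1 (h m h2 hn), hself.1 (h a ha han)⟩
  · rintro ⟨h, hs⟩ m h2 hn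
    rcases eq_or_ne m a with rfl | hma
    · exact hself.2 hs
    · exact (hne m h2 hn hma).2 (h m h2 hn hma)

end InsertOccurrence

theorem isTreeRep_append_cons_of_append_eq {n i : ℕ} {A B S T : List ℕ}
    (hv : IsTreeRep n (A ++ i :: B)) (hiA : i ∉ A) (hi : 2 ≤ i) (hin : i ≤ n)
    (hw : A ++ B = S ++ T) (hS : 0 < S.length) (hk : S.length ≤ secondOcc (S ++ T) (i - 1)) :
    IsTreeRep n (S ++ i :: T) := by
  obtain ⟨hlen, hmem, hcount, hhead, hfirst, hsecond⟩ := hv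
  have hperm : S ++ i :: T ~ A ++ i :: B := perm_middle.trans (hw ▸ perm_middle.symm)
  have hcount' : ∀ x, 1 ≤ x → x ≤ n → (S ++ i :: T).count x = 2 := fun x h1 h2 =>
    hperm.count_eq x ▸ hcount x h1 h2
  have hmem_w : ∀ x, 1 ≤ x → x ≤ n → x ∈ S ++ T := fun x h1 h2 => by
    have := hcount' x h1 h2
    simp only [count_append, count_cons] at this
    exact count_pos_iff.1 (by rw [count_append]; split_ifs at this <;> omega)
  have hcount_i : (S ++ T).count i = 1 := by
    have := hcount' i (by omega) hin
    simp only [count_append, count_cons_self] at this ⊢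
    omega
  have hiB : i ∈ B := by
    rw [← hw, count_append, count_eq_zero.2 hiA] at hcount_i
    exact count_pos_iff.1 (by omega)
  have hA : 0 < A.length := length_pos_iff.2 fun hA => by
    rw [hA, nil_append, getD_cons_zero] at hhead
    omega
  rw [firstOcc_lt_secondOcc_append_cons_iff (hw ▸ hmem_w) hiA hiB hi hin, hw] at hfirst
  rw [secondOcc_chain_append_cons_iff (hw ▸ hmem_w) hiB, hw] at hsecond
  have hiT : i ∈ T := (length_le_secondOcc_append_iff (hmem_w i (by omega) hin)).1
    (hk.trans (hsecond i hi hin).le)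
  have hiS : i ∉ S := fun hiS => by
    rw [count_append] at hcount_i
    have := count_pos_iff.2 hiS
    have := count_pos_iff.2 hiT
    omega
  refine ⟨hperm.length_eq.trans hlen, fun x hx => hmem x (hperm.subset hx), hcount', ?_,
    (firstOcc_lt_secondOcc_append_cons_iff hmem_w hiS hiT hi hin).2 ⟨hfirst.1, hk⟩,
    (secondOcc_chain_append_cons_iff hmem_w hiT).2 hsecond⟩
  rw [getD_zero_append_cons hS, ← hw, ← getD_zero_append_cons hA, hhead]

/-- A single HOP applied to a tree representation on `{1,…,n}` yields again a
tree representation on `{1,…,n}`. -/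
theorem stmt6 (n : ℕ) (v v' : List ℕ) (hv : IsTreeRep n v) (h : IsHop n v v') :
    IsTreeRep n v' := by
  obtain ⟨i, k, hi2, hin, hk1, hk2, rfl⟩ := h
  have hiv : i ∈ v := count_pos_iff.1 (by rw [hv.2.2.1 i (by omega) hin]; omega)
  obtain ⟨A, B, rfl, hiA⟩ := eq_append_cons_of_mem hiv
  rw [erase_append_right _ hiA, erase_cons_head] at hk2 ⊢
  have hkw : k ≤ (A ++ B).length := by unfold secondOcc at hk2; omega
  rw [insertIdx_eq_take_append_cons_drop hkw]
  refine isTreeRep_append_cons_of_append_eq hv hiA hi2 hin (take_append_drop k _).symm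
    (by rw [length_take_of_le hkw]; omega) ?_
  rwa [take_append_drop, length_take_of_le hkw]
end

section
/- Let n ≥ 2. The HOP distance d is a metric on the set of tree representations on {1,…,n}: for all tree representations u, v, w on {1,…,n}, (i) d(u,v) is finite; (ii) d(u,v) = d(v,u); (iii) d(u,v) = 0 if and only if u = v; and (iv) d(u,w) ≤ d(u,v) + d(v,w). -/
/-- `u` can be transformed into `v` by a sequence of exactly `m` HOPs. -/
def HopChain (n m : ℕ) (u v : List ℕ) : Prop :=
  ∃ f : ℕ → List ℕ, f 0 = u ∧ f m = v ∧ ∀ j < m, IsHop n (f j) (f (j + 1))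

/-- The HOP distance: minimum number of HOPs transforming `u` into `v`. -/
noncomputable def hopDist (n : ℕ) (u v : List ℕ) : ℕ :=
  sInf {m | HopChain n m u v}

section Occurrences

variable {v : List ℕ} {x j p q : ℕ}

theorem firstOcc_lt_length (h : x ∈ v) : firstOcc v x < v.length :=
  List.idxOf_lt_length_of_mem h

theorem getElem_firstOcc (h : x ∈ v) : v[firstOcc v x]'(firstOcc_lt_length h) = x :=
  List.getElem_idxOf _

theorem getElem_ne_of_lt_firstOcc (hq : q < firstOcc v x) (hqv : q < v.length) : v[q] ≠ x := by
  simpa using List.not_of_lt_findIdx (p := (· == x)) hq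

theorem firstOcc_eq (hp : p < v.length) (hx : v[p] = x)
    (hb : ∀ q (hq : q < p), v[q] ≠ x) : firstOcc v x = p := by
  refine (List.findIdx_eq hp).2 ⟨by simpa using hx, fun q hq => ?_⟩
  simpa using hb q hq

theorem secondOcc_eq_firstOcc_reverse : secondOcc v x = v.length - 1 - firstOcc v.reverse x := rfl

theorem secondOcc_lt_length_s14 (h : x ∈ v) : secondOcc v x < v.length := by
  have : 0 < v.length := List.length_pos_of_mem h
  rw [secondOcc_eq_firstOcc_reverse]; omega

theorem getElem_secondOcc (h : x ∈ v) : v[secondOcc v x]'(secondOcc_lt_length_s14 h) = x := by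
  have := getElem_firstOcc (List.mem_reverse.2 h)
  rwa [List.getElem_reverse] at this

theorem getElem_ne_of_secondOcc_lt (h : x ∈ v) (hq : secondOcc v x < q) (hqv : q < v.length) :
    v[q] ≠ x := by
  have hr := firstOcc_lt_length (List.mem_reverse.2 h)
  rw [List.length_reverse] at hr
  rw [secondOcc_eq_firstOcc_reverse] at hq
  have := getElem_ne_of_lt_firstOcc (v := v.reverse) (x := x) (q := v.length - 1 - q)
    (by omega) (by simp; omega)
  rw [List.getElem_reverse] at this
  simpa [show v.length - 1 - (v.length - 1 - q) = q by omega] using this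

theorem secondOcc_eq (hp : p < v.length) (hx : v[p] = x)
    (ha : ∀ q (hq : q < v.length), p < q → v[q] ≠ x) : secondOcc v x = p := by
  have hm : x ∈ v := hx ▸ List.getElem_mem hp
  rcases lt_trichotomy (secondOcc v x) p with h | h | h
  · exact absurd hx (getElem_ne_of_secondOcc_lt hm h hp)
  · exact h
  · exact absurd (getElem_secondOcc hm) (ha _ (secondOcc_lt_length_s14 hm) h)

theorem firstOcc_le_secondOcc (h : x ∈ v) : firstOcc v x ≤ secondOcc v x := by
  by_contra! hlt
  exact getElem_ne_of_lt_firstOcc hlt _ (getElem_secondOcc h)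

theorem secondOcc_ne_firstOcc_of_ne (hx : x ∈ v) (hj : j ∈ v) (hne : j ≠ x) :
    secondOcc v j ≠ firstOcc v x := fun h =>
  hne (by rw [← getElem_secondOcc hj, ← getElem_firstOcc hx]; simp only [h])

theorem firstOcc_ne_firstOcc_of_ne (hx : x ∈ v) (hj : j ∈ v) (hne : j ≠ x) :
    firstOcc v j ≠ firstOcc v x := fun h =>
  hne (by rw [← getElem_firstOcc hj, ← getElem_firstOcc hx]; simp only [h])

theorem eq_take_firstOcc_append (h : x ∈ v) :
    v = v.take (firstOcc v x) ++ x :: v.drop (firstOcc v x + 1) := by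
  conv_lhs => rw [← List.take_append_drop (firstOcc v x) v,
    ← List.getElem_cons_drop (firstOcc_lt_length h), getElem_firstOcc h]

theorem secondOcc_eq_firstOcc_iff (h : x ∈ v) :
    secondOcc v x = firstOcc v x ↔ v.count x = 1 := by
  have hp := firstOcc_lt_length h
  have htake : x ∉ v.take (firstOcc v x) := by
    intro hm
    obtain ⟨q, hq, hqx⟩ := List.mem_iff_getElem.1 hm
    simp only [List.length_take, List.getElem_take] at hq hqx
    exact getElem_ne_of_lt_firstOcc (by omega) _ hqx
  have hcount : v.count x = (v.drop (firstOcc v x + 1)).count x + 1 := by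
    conv_lhs => rw [eq_take_firstOcc_append h]
    simp [List.count_eq_zero.2 htake]
  rw [hcount, add_eq_right, List.count_eq_zero, List.mem_drop_iff_getElem]
  constructor
  · rintro hs ⟨q, hq, hqx⟩
    exact getElem_ne_of_secondOcc_lt h (by omega) (by omega) hqx
  · intro hnot
    refine secondOcc_eq hp (getElem_firstOcc h) fun q hq hpq hqx => hnot ?_
    exact ⟨q - (firstOcc v x + 1), by omega, by convert hqx using 2; omega⟩

theorem length_le_secondOcc_append {A B : List ℕ} {x : ℕ} (h : x ∈ B) :
    A.length ≤ secondOcc (A ++ B) x := by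
  obtain ⟨q, hq, hqx⟩ := List.mem_iff_getElem.1 h
  by_contra! hlt
  refine getElem_ne_of_secondOcc_lt (List.mem_append_right A h) (q := A.length + q) (by omega)
    (by simp; omega) ?_
  rw [List.getElem_append_right (by omega)]
  convert hqx using 2
  omega

end Occurrences

section Shifts

-- `eraseShift p q` (resp. `insertShift k q`) is the new position of the entry at position `q ≠ p`
-- once the entry at position `p` is erased (resp. an entry is inserted at position `k`).
def eraseShift (p q : ℕ) : ℕ := if q < p then q else q - 1

def insertShift (k q : ℕ) : ℕ := if q < k then q else q + 1

variable {a b p k q : ℕ}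

theorem eraseShift_lt_eraseShift_iff (ha : a ≠ p) (hb : b ≠ p) :
    eraseShift p a < eraseShift p b ↔ a < b := by
  unfold eraseShift; split_ifs <;> omega

theorem insertShift_lt_insertShift_iff : insertShift k a < insertShift k b ↔ a < b := by
  unfold insertShift; split_ifs <;> omega

theorem insertShift_eraseShift (h : q ≠ p) : insertShift p (eraseShift p q) = q := by
  unfold insertShift eraseShift; split_ifs <;> omega

theorem insertShift_eraseShift_lt_iff (ha : a ≠ p) (hb : b ≠ p) :
    insertShift k (eraseShift p a) < insertShift k (eraseShift p b) ↔ a < b := by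
  rw [insertShift_lt_insertShift_iff, eraseShift_lt_eraseShift_iff ha hb]

end Shifts

section EraseInsert

variable {v l : List ℕ} {x j p q k : ℕ}

theorem erase_eq_eraseIdx_firstOcc : v.erase x = v.eraseIdx (firstOcc v x) :=
  (List.eraseIdx_idxOf_eq_erase x v).symm

theorem getElem_erase (h : x ∈ v) (hq : q < (v.erase x).length) :
    (v.erase x)[q] = v[insertShift (firstOcc v x) q]'(by
      have := List.length_erase_of_mem h; unfold insertShift; split_ifs <;> omega) := by
  simp only [erase_eq_eraseIdx_firstOcc, List.getElem_eraseIdx, insertShift]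
  split_ifs <;> rfl

theorem getElem_erase_eraseShift (h : x ∈ v) (hq : q < v.length) (hqx : q ≠ firstOcc v x) :
    (v.erase x)[eraseShift (firstOcc v x) q]'(by
      have := List.length_erase_of_mem h; have := firstOcc_lt_length h
      unfold eraseShift; split_ifs <;> omega) = v[q] := by
  simp only [getElem_erase h, insertShift_eraseShift hqx]

theorem getElem_insertIdx_insertShift (hk : k ≤ l.length) (hq : q < l.length) :
    (l.insertIdx k x)[insertShift k q]'(by
      rw [List.length_insertIdx_of_le_length hk]; unfold insertShift; split_ifs <;> omega) =
      l[q] := by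
  simp only [List.getElem_insertIdx, insertShift]
  split_ifs <;> first | rfl | omega

theorem getElem_insertIdx_of_ne (hk : k ≤ l.length) (hq : q < (l.insertIdx k x).length)
    (hqk : q ≠ k) :
    (l.insertIdx k x)[q] = l[eraseShift k q]'(by
      rw [List.length_insertIdx_of_le_length hk] at hq
      unfold eraseShift; split_ifs <;> omega) := by
  simp only [List.getElem_insertIdx, eraseShift]
  split_ifs <;> rfl

theorem firstOcc_erase (hx : x ∈ v) (hj : j ∈ v) (hne : j ≠ x) :
    firstOcc (v.erase x) j = eraseShift (firstOcc v x) (firstOcc v j) := by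
  have hpj := firstOcc_ne_firstOcc_of_ne hx hj hne
  apply firstOcc_eq
  · rw [getElem_erase_eraseShift hx (firstOcc_lt_length hj) hpj, getElem_firstOcc hj]
  · intro q hq
    rw [getElem_erase hx]
    apply getElem_ne_of_lt_firstOcc
    unfold insertShift eraseShift at *; split_ifs at * <;> omega

theorem secondOcc_erase (hx : x ∈ v) (hj : j ∈ v) (hne : secondOcc v j ≠ firstOcc v x) :
    secondOcc (v.erase x) j = eraseShift (firstOcc v x) (secondOcc v j) := by
  apply secondOcc_eq
  · rw [getElem_erase_eraseShift hx (secondOcc_lt_length_s14 hj) hne, getElem_secondOcc hj]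
  · intro q hq hlt
    rw [getElem_erase hx]
    apply getElem_ne_of_secondOcc_lt hj
    unfold insertShift eraseShift at *; split_ifs at * <;> omega

theorem firstOcc_insertIdx (hk : k ≤ l.length) (hj : j ∈ l) (hne : x ≠ j) :
    firstOcc (l.insertIdx k x) j = insertShift k (firstOcc l j) := by
  apply firstOcc_eq
  · rw [getElem_insertIdx_insertShift hk (firstOcc_lt_length hj), getElem_firstOcc hj]
  · intro q hq
    by_cases hqk : q = k
    · simp only [hqk, List.getElem_insertIdx_self]; exact hne
    · rw [getElem_insertIdx_of_ne hk _ hqk]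
      apply getElem_ne_of_lt_firstOcc
      unfold insertShift eraseShift at *; split_ifs at * <;> omega

theorem secondOcc_insertIdx (hk : k ≤ l.length) (hj : j ∈ l)
    (h : x = j → k ≤ secondOcc l j) :
    secondOcc (l.insertIdx k x) j = insertShift k (secondOcc l j) := by
  apply secondOcc_eq
  · rw [getElem_insertIdx_insertShift hk (secondOcc_lt_length_s14 hj), getElem_secondOcc hj]
  · intro q hq hlt
    by_cases hqk : q = k
    · simp only [hqk, List.getElem_insertIdx_self]
      intro hxj
      have := h hxj
      unfold insertShift at hlt; split_ifs at hlt <;> omega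
    · rw [getElem_insertIdx_of_ne hk _ hqk]
      apply getElem_ne_of_secondOcc_lt hj
      unfold insertShift eraseShift at *; split_ifs at * <;> omega

theorem firstOcc_insertIdx_self (hx : x ∈ l) (hk : k ≤ firstOcc l x) :
    firstOcc (l.insertIdx k x) x = k := by
  have := firstOcc_lt_length hx
  apply firstOcc_eq (by rw [List.length_insertIdx_of_le_length (by omega)]; omega)
    (List.getElem_insertIdx_self _)
  intro q hq
  rw [List.getElem_insertIdx_of_lt hq]
  exact getElem_ne_of_lt_firstOcc (by omega) _

theorem erase_insertIdx (hx : x ∈ l) (hk : k ≤ firstOcc l x) :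
    (l.insertIdx k x).erase x = l := by
  rw [erase_eq_eraseIdx_firstOcc, firstOcc_insertIdx_self hx hk, List.eraseIdx_insertIdx_self]

theorem insertIdx_firstOcc_erase (h : x ∈ v) : (v.erase x).insertIdx (firstOcc v x) x = v := by
  conv_rhs => rw [← List.insertIdx_eraseIdx_getElem (firstOcc_lt_length h)]
  rw [getElem_firstOcc h, erase_eq_eraseIdx_firstOcc]

theorem List.insertIdx_length_append {α : Type*} (A B : List α) (x : α) :
    (A ++ B).insertIdx A.length x = A ++ x :: B := by
  induction A with
  | nil => simp
  | cons a A ih => simpa [List.insertIdx_succ_cons] using ih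

end EraseInsert

section HopChain

variable {n m m' : ℕ} {u v w : List ℕ}

theorem hopChain_zero_iff : HopChain n 0 u v ↔ u = v :=
  ⟨fun ⟨f, h0, h1, _⟩ => h0.symm.trans h1, fun h => ⟨fun _ => u, rfl, h, by simp⟩⟩

theorem hopChain_succ_iff : HopChain n (m + 1) u w ↔ ∃ v, IsHop n u v ∧ HopChain n m v w := by
  constructor
  · rintro ⟨f, h0, hm, hf⟩
    exact ⟨f 1, h0 ▸ hf 0 (by omega), fun j => f (j + 1), rfl, hm,
      fun j hj => hf (j + 1) (by omega)⟩
  · rintro ⟨v, huv, g, h0, hm, hg⟩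
    refine ⟨fun j => if j = 0 then u else g (j - 1), rfl, by simpa using hm, fun j hj => ?_⟩
    rcases j with _ | j
    · simpa [h0] using huv
    · simpa using hg j (by omega)

theorem HopChain.trans (h₁ : HopChain n m u v) (h₂ : HopChain n m' v w) :
    HopChain n (m + m') u w := by
  induction m generalizing u with
  | zero => rwa [hopChain_zero_iff.1 h₁, zero_add]
  | succ m ih =>
    obtain ⟨v₁, hop, h⟩ := hopChain_succ_iff.1 h₁
    rw [add_right_comm]
    exact hopChain_succ_iff.2 ⟨v₁, hop, ih h⟩

theorem IsHop.hopChain (h : IsHop n u v) : HopChain n 1 u v :=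
  hopChain_succ_iff.2 ⟨v, h, hopChain_zero_iff.2 rfl⟩

end HopChain

namespace IsTreeRep

variable {n i j k m d : ℕ} {u v w w' t : List ℕ}

theorem count_eq_two (hw : IsTreeRep n w) (h1 : 1 ≤ j) (hj : j ≤ n) : w.count j = 2 :=
  hw.2.2.1 j h1 hj

theorem getD_zero (hw : IsTreeRep n w) : w.getD 0 0 = 1 :=
  hw.2.2.2.1

theorem firstOcc_lt_secondOcc_pred (hw : IsTreeRep n w) (h2 : 2 ≤ j) (hj : j ≤ n) :
    firstOcc w j < secondOcc w (j - 1) :=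
  hw.2.2.2.2.1 j h2 hj

theorem secondOcc_pred_lt (hw : IsTreeRep n w) (h2 : 2 ≤ j) (hj : j ≤ n) :
    secondOcc w (j - 1) < secondOcc w j :=
  hw.2.2.2.2.2 j h2 hj

theorem one_le (hw : IsTreeRep n w) : 1 ≤ n := by
  by_contra! h0
  have hnil : w = [] := List.eq_nil_of_length_eq_zero (by rw [hw.1]; omega)
  have := hw.getD_zero
  simp [hnil] at this

theorem mem (hw : IsTreeRep n w) (h1 : 1 ≤ j) (hj : j ≤ n) : j ∈ w :=
  List.count_pos_iff.1 (by rw [hw.count_eq_two h1 hj]; omega)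

theorem firstOcc_lt_secondOcc (hw : IsTreeRep n w) (h1 : 1 ≤ j) (hj : j ≤ n) :
    firstOcc w j < secondOcc w j := by
  have hm := hw.mem h1 hj
  have hne : secondOcc w j ≠ firstOcc w j := by
    rw [Ne, secondOcc_eq_firstOcc_iff hm, hw.count_eq_two h1 hj]; omega
  have := firstOcc_le_secondOcc hm
  omega

theorem secondOcc_ne_firstOcc (hw : IsTreeRep n w) (h1 : 1 ≤ i) (hi : i ≤ n) (hj : j ∈ w) :
    secondOcc w j ≠ firstOcc w i := by
  rcases eq_or_ne j i with rfl | hne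
  · exact (hw.firstOcc_lt_secondOcc h1 hi).ne'
  · exact secondOcc_ne_firstOcc_of_ne (hw.mem h1 hi) hj hne

theorem one_le_firstOcc (hw : IsTreeRep n w) (h2 : 2 ≤ i) (hi : i ≤ n) :
    1 ≤ firstOcc w i := by
  have hm := hw.mem (by omega) hi
  by_contra! h0
  have h := getElem_firstOcc hm
  simp only [Nat.lt_one_iff.1 h0] at h
  have h1 := hw.getD_zero
  rw [List.getD_eq_getElem _ _ (List.length_pos_of_mem hm), h] at h1
  omega

theorem secondOcc_erase_pred (hw : IsTreeRep n w) (h2 : 2 ≤ i) (hi : i ≤ n) :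
    secondOcc (w.erase i) (i - 1) = secondOcc w (i - 1) - 1 := by
  have hlt := hw.firstOcc_lt_secondOcc_pred h2 hi
  rw [secondOcc_erase (hw.mem (by omega) hi) (hw.mem (by omega) (by omega)) hlt.ne', eraseShift,
    if_neg (by omega)]

theorem secondOcc_erase_pred_lt_firstOcc_erase (hw : IsTreeRep n w) (h2 : 2 ≤ i) (hi : i ≤ n) :
    secondOcc (w.erase i) (i - 1) < firstOcc (w.erase i) i := by
  have hm := hw.mem (by omega) hi
  have hpi := hw.firstOcc_lt_secondOcc (by omega) hi
  have hfirst := hw.firstOcc_lt_secondOcc_pred h2 hi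
  have hsecond := hw.secondOcc_pred_lt h2 hi
  have hcount : (w.erase i).count i = 1 := by
    rw [List.count_erase_self, hw.count_eq_two (by omega) hi]
  have hme : i ∈ w.erase i := List.count_pos_iff.1 (by omega)
  rw [← (secondOcc_eq_firstOcc_iff hme).2 hcount, secondOcc_erase hm hm hpi.ne',
    hw.secondOcc_erase_pred h2 hi, eraseShift, if_neg hpi.not_gt]
  omega

theorem le_firstOcc_erase (hw : IsTreeRep n w) (h2 : 2 ≤ i) (hi : i ≤ n)
    (hk : k ≤ secondOcc (w.erase i) (i - 1)) : k ≤ firstOcc (w.erase i) i :=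
  (hk.trans_lt (hw.secondOcc_erase_pred_lt_firstOcc_erase h2 hi)).le

theorem mem_erase (hw : IsTreeRep n w) (h1 : 1 ≤ i) (hi : i ≤ n) (hj : j ∈ w) :
    j ∈ w.erase i := by
  rcases eq_or_ne j i with rfl | hne
  · exact List.count_pos_iff.1 (by rw [List.count_erase_self, hw.count_eq_two h1 hi]; omega)
  · exact (List.mem_erase_of_ne hne).2 hj

theorem firstOcc_insertIdx_erase (hw : IsTreeRep n w) (h2 : 2 ≤ i) (hi : i ≤ n) (hj : j ∈ w)
    (hne : j ≠ i) (hk : k ≤ secondOcc (w.erase i) (i - 1)) :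
    firstOcc ((w.erase i).insertIdx k i) j =
      insertShift k (eraseShift (firstOcc w i) (firstOcc w j)) := by
  have hm := hw.mem (by omega) hi
  rw [firstOcc_insertIdx ((hw.le_firstOcc_erase h2 hi hk).trans
      (firstOcc_lt_length (hw.mem_erase (by omega) hi hm)).le) ((List.mem_erase_of_ne hne).2 hj)
      hne.symm, firstOcc_erase hm hj hne]

theorem secondOcc_insertIdx_erase (hw : IsTreeRep n w) (h2 : 2 ≤ i) (hi : i ≤ n) (hj : j ∈ w)
    (hk : k ≤ secondOcc (w.erase i) (i - 1)) :
    secondOcc ((w.erase i).insertIdx k i) j =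
      insertShift k (eraseShift (firstOcc w i) (secondOcc w j)) := by
  have hme := hw.mem_erase (by omega) hi (hw.mem (by omega) hi)
  have hki := hw.le_firstOcc_erase h2 hi hk
  rw [secondOcc_insertIdx (hki.trans (firstOcc_lt_length hme).le) (hw.mem_erase (by omega) hi hj)
      (by rintro rfl; exact hki.trans (firstOcc_le_secondOcc hme)),
    secondOcc_erase (hw.mem (by omega) hi) hj (hw.secondOcc_ne_firstOcc (by omega) hi hj)]

theorem getD_zero_insertIdx_erase (hw : IsTreeRep n w) (h2 : 2 ≤ i) (hi : i ≤ n) (hk1 : 1 ≤ k)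
    (hkl : k ≤ (w.erase i).length) : ((w.erase i).insertIdx k i).getD 0 0 = 1 := by
  have hw0 := hw.getD_zero
  have hpos : 0 < w.length := by have := hw.one_le; rw [hw.1]; omega
  rw [List.getD_eq_getElem _ _ hpos] at hw0
  rw [List.getD_eq_getElem _ _ (by rw [List.length_insertIdx_of_le_length hkl]; omega),
    List.getElem_insertIdx_of_lt hk1]
  simp only [erase_eq_eraseIdx_firstOcc, List.getElem_eraseIdx_of_lt _ (hw.one_le_firstOcc h2 hi)]
  exact hw0

theorem insertIdx_erase (hw : IsTreeRep n w) (h2 : 2 ≤ i) (hi : i ≤ n) (hk1 : 1 ≤ k)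
    (hk : k ≤ secondOcc (w.erase i) (i - 1)) : IsTreeRep n ((w.erase i).insertIdx k i) := by
  have hm := hw.mem (by omega) hi
  have hme := hw.mem_erase (by omega) hi hm
  have hki := hw.le_firstOcc_erase h2 hi hk
  have hkl : k ≤ (w.erase i).length := hki.trans (firstOcc_lt_length hme).le
  have hperm : ((w.erase i).insertIdx k i).Perm w :=
    (List.perm_insertIdx i _ hkl).trans (List.perm_cons_erase hm).symm
  have hne : ∀ {j}, 1 ≤ j → j ≤ n → secondOcc w j ≠ firstOcc w i := fun h1 hj =>
    hw.secondOcc_ne_firstOcc (by omega) hi (hw.mem h1 hj)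
  refine ⟨by rw [hperm.length_eq, hw.1], fun x hx => hw.2.1 x (hperm.mem_iff.1 hx),
    fun j h1 hj => hperm.count_eq j ▸ hw.count_eq_two h1 hj,
    hw.getD_zero_insertIdx_erase h2 hi hk1 hkl, fun j hj2 hjn => ?_, fun j hj2 hjn => ?_⟩
  · rcases eq_or_ne j i with rfl | hji
    · rw [firstOcc_insertIdx_self hme hki, secondOcc_insertIdx hkl
        (hw.mem_erase (by omega) hi (hw.mem (by omega) (by omega))) (by omega), insertShift,
        if_neg (by omega)]
      omega
    · rw [hw.firstOcc_insertIdx_erase h2 hi (hw.mem (by omega) hjn) hji hk,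
        hw.secondOcc_insertIdx_erase h2 hi (hw.mem (by omega) (by omega)) hk,
        insertShift_eraseShift_lt_iff (firstOcc_ne_firstOcc_of_ne hm (hw.mem (by omega) hjn) hji)
          (hne (by omega) (by omega))]
      exact hw.firstOcc_lt_secondOcc_pred hj2 hjn
  · rw [hw.secondOcc_insertIdx_erase h2 hi (hw.mem (by omega) (by omega)) hk,
      hw.secondOcc_insertIdx_erase h2 hi (hw.mem (by omega) hjn) hk,
      insertShift_eraseShift_lt_iff (hne (by omega) (by omega)) (hne (by omega) hjn)]
    exact hw.secondOcc_pred_lt hj2 hjn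

theorem of_isHop (hw : IsTreeRep n w) (h : IsHop n w w') : IsTreeRep n w' := by
  obtain ⟨i, k, h2, hi, hk1, hk, rfl⟩ := h
  exact hw.insertIdx_erase h2 hi hk1 hk

theorem isHop_symm (hw : IsTreeRep n w) (h : IsHop n w w') : IsHop n w' w := by
  obtain ⟨i, k, h2, hi, hk1, hk, rfl⟩ := h
  have hm := hw.mem (by omega) hi
  have hfirst := hw.firstOcc_lt_secondOcc_pred h2 hi
  refine ⟨i, firstOcc w i, h2, hi, hw.one_le_firstOcc h2 hi, ?_, ?_⟩
  · rw [erase_insertIdx (hw.mem_erase (by omega) hi hm) (hw.le_firstOcc_erase h2 hi hk),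
      hw.secondOcc_erase_pred h2 hi]
    omega
  · rw [erase_insertIdx (hw.mem_erase (by omega) hi hm) (hw.le_firstOcc_erase h2 hi hk),
      insertIdx_firstOcc_erase hm]

theorem hopChain_symm (hu : IsTreeRep n u) (h : HopChain n m u v) :
    HopChain n m v u := by
  induction m generalizing u with
  | zero => exact hopChain_zero_iff.2 (hopChain_zero_iff.1 h).symm
  | succ m ih =>
    obtain ⟨v₁, hop, h⟩ := hopChain_succ_iff.1 h
    exact (ih (hu.of_isHop hop) h).trans (hu.isHop_symm hop).hopChain

theorem secondOcc_add_le (hw : IsTreeRep n w) (h1 : 1 ≤ j) (hjd : j + d ≤ n) :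
    secondOcc w j + d ≤ secondOcc w (j + d) := by
  induction d with
  | zero => rfl
  | succ d ih =>
    have := hw.secondOcc_pred_lt (j := j + d + 1) (by omega) (by omega)
    rw [Nat.add_sub_cancel] at this
    have := ih (by omega)
    rw [show j + (d + 1) = j + d + 1 by omega]
    omega

theorem mem_of_range'_append (hz : IsTreeRep n (List.range' 1 m ++ t))
    (h1 : 1 ≤ j) (hj : j ≤ n) : j ∈ t := by
  have hcount := hz.count_eq_two h1 hj
  rw [List.count_append, List.count_range'] at hcount
  exact List.count_pos_iff.1 (by split_ifs at hcount <;> omega)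

theorem isHop_range'_append (hz : IsTreeRep n (List.range' 1 m ++ t)) (h1 : 1 ≤ m) (hm : m < n) :
    IsHop n (List.range' 1 m ++ t) (List.range' 1 (m + 1) ++ t.erase (m + 1)) := by
  have herase : (List.range' 1 m ++ t).erase (m + 1) = List.range' 1 m ++ t.erase (m + 1) :=
    List.erase_append_right _ (by simp; omega)
  have hmem : m ∈ t.erase (m + 1) :=
    (List.mem_erase_of_ne (by omega)).2 (hz.mem_of_range'_append h1 hm.le)
  refine ⟨m + 1, m, by omega, hm, h1, ?_, ?_⟩
  · have := length_le_secondOcc_append (A := List.range' 1 m) hmem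
    rw [List.length_range'] at this
    rwa [herase, Nat.add_sub_cancel]
  · have := List.insertIdx_length_append (List.range' 1 m) (t.erase (m + 1)) (m + 1)
    rw [List.length_range'] at this
    rw [herase, this, List.range'_1_concat, List.append_assoc, add_comm 1 m, List.singleton_append]

theorem exists_hopChain_range'_append (hw : IsTreeRep n w) (h1 : 1 ≤ m) (hm : m ≤ n) :
    ∃ c t, HopChain n c w (List.range' 1 m ++ t) ∧ IsTreeRep n (List.range' 1 m ++ t) := by
  induction m, h1 using Nat.le_induction with
  | base =>
    obtain ⟨a, t, rfl⟩ := List.exists_cons_of_ne_nil (List.ne_nil_of_length_pos (by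
      rw [hw.1]; omega))
    obtain rfl : a = 1 := hw.getD_zero
    exact ⟨0, t, hopChain_zero_iff.2 rfl, hw⟩
  | succ m h1 ih =>
    obtain ⟨c, t, hc, hz⟩ := ih (by omega)
    have hop := hz.isHop_range'_append h1 (by omega)
    exact ⟨c + 1, _, hc.trans hop.hopChain, hz.of_isHop hop⟩

theorem eq_range'_of_range'_append (hz : IsTreeRep n (List.range' 1 n ++ t)) :
    t = List.range' 1 n := by
  have hlen : t.length = n := by
    have := hz.1; simp only [List.length_append, List.length_range'] at this; omega
  have hsecond (j : ℕ) (h1 : 1 ≤ j) (hj : j ≤ n) :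
      secondOcc (List.range' 1 n ++ t) j = n + j - 1 := by
    -- the `n` second occurrences are strictly increasing positions in `[n, 2n)`
    have hlow := hz.secondOcc_add_le (j := 1) (d := j - 1) le_rfl (by omega)
    have hup := hz.secondOcc_add_le (j := j) (d := n - j) h1 (by omega)
    have hbase := length_le_secondOcc_append (A := List.range' 1 n)
      (hz.mem_of_range'_append le_rfl (by omega))
    have htop := secondOcc_lt_length_s14 (hz.mem_of_range'_append (j := n) (by omega) le_rfl
      |> List.mem_append_right (List.range' 1 n))
    rw [Nat.add_sub_cancel' h1] at hlow
    rw [Nat.add_sub_cancel' hj] at hup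
    simp only [List.length_append, List.length_range'] at hbase htop
    omega
  refine List.ext_getElem (by simp [hlen]) fun q hq _ => ?_
  have h := getElem_secondOcc (hz.mem (j := q + 1) (by omega) (by omega))
  simp only [hsecond (q + 1) (by omega) (by omega), show n + (q + 1) - 1 = n + q by omega] at h
  rw [List.getElem_append_right (by simp)] at h
  simp only [List.length_range', Nat.add_sub_cancel_left] at h
  rw [h, List.getElem_range']
  omega

theorem exists_hopChain (hu : IsTreeRep n u) (hv : IsTreeRep n v) : ∃ m, HopChain n m u v := by
  obtain ⟨c, t, hc, hz⟩ := hu.exists_hopChain_range'_append hu.one_le le_rfl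
  obtain ⟨c', t', hc', hz'⟩ := hv.exists_hopChain_range'_append hv.one_le le_rfl
  rw [hz.eq_range'_of_range'_append] at hc
  rw [hz'.eq_range'_of_range'_append] at hc'
  exact ⟨c + c', hc.trans (hv.hopChain_symm hc')⟩

theorem hopChain_hopDist (hu : IsTreeRep n u) (hv : IsTreeRep n v) :
    HopChain n (hopDist n u v) u v :=
  Nat.sInf_mem (hu.exists_hopChain hv)

end IsTreeRep

section HopDist

variable {n m : ℕ} {u v w : List ℕ}

theorem hopDist_le (h : HopChain n m u v) : hopDist n u v ≤ m :=
  Nat.sInf_le h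

theorem hopDist_comm (hu : IsTreeRep n u) (hv : IsTreeRep n v) : hopDist n u v = hopDist n v u :=
  congrArg sInf (Set.ext fun _ => ⟨hu.hopChain_symm, hv.hopChain_symm⟩)

theorem hopDist_eq_zero_iff (hu : IsTreeRep n u) (hv : IsTreeRep n v) :
    hopDist n u v = 0 ↔ u = v := by
  refine ⟨fun h => hopChain_zero_iff.1 (h ▸ hu.hopChain_hopDist hv), ?_⟩
  rintro rfl
  exact Nat.eq_zero_of_le_zero (hopDist_le (hopChain_zero_iff.2 rfl))

theorem hopDist_triangle (hu : IsTreeRep n u) (hv : IsTreeRep n v) (hw : IsTreeRep n w) :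
    hopDist n u w ≤ hopDist n u v + hopDist n v w :=
  hopDist_le ((hu.hopChain_hopDist hv).trans (hv.hopChain_hopDist hw))

end HopDist

theorem stmt14_general (n : ℕ) (u v w : List ℕ)
    (hu : IsTreeRep n u) (hv : IsTreeRep n v) (hw : IsTreeRep n w) :
    (∃ m, HopChain n m u v) ∧
    hopDist n u v = hopDist n v u ∧
    (hopDist n u v = 0 ↔ u = v) ∧
    hopDist n u w ≤ hopDist n u v + hopDist n v w :=
  ⟨hu.exists_hopChain hv, hopDist_comm hu hv, hopDist_eq_zero_iff hu hv,
    hopDist_triangle hu hv hw⟩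

/-- For `n ≥ 2`, the HOP distance is a metric on tree representations on
`{1,…,n}`: it is finite (some finite sequence of HOPs transforms `u` into `v`),
symmetric, zero exactly on equal representations, and satisfies the triangle
inequality. -/
theorem stmt14 (n : ℕ) (hn : 2 ≤ n) (u v w : List ℕ)
    (hu : IsTreeRep n u) (hv : IsTreeRep n v) (hw : IsTreeRep n w) :
    (∃ m, HopChain n m u v) ∧
    hopDist n u v = hopDist n v u ∧
    (hopDist n u v = 0 ↔ u = v) ∧
    hopDist n u w ≤ hopDist n u v + hopDist n v w :=
  stmt14_general n u v w hu hv hw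
end
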